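/- On the polynomial ring P_{kn} with its commuting gl_k and gl_n actions, the operators I^{(k)} − k Σ_{a=1}^k e_{aa}^{(k)} and I^{(n)} − n Σ_{i=1}^n e_{ii}^{(n)} act identically, where I^{(k)} = Σ_{a,b=1}^k e_{ab}^{(k)} e_{ba}^{(k)} and I^{(n)} = Σ_{i,j=1}^n e_{ij}^{(n)} e_{ji}^{(n)} are the respective Casimir elements realized as differential operators. -/

import Mathlib

/-! Moving every derivative to the right with `[∂_u, x_v] = δ_{uv}` gives
`e_{ab} e_{ba} = Σ_{i,j} x_{ai} x_{bj} ∂_{bi} ∂_{aj} + e_{aa}` in `gl_k` and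
`e_{ij} e_{ji} = Σ_{a,b} x_{ai} x_{bj} ∂_{aj} ∂_{bi} + e_{ii}` in `gl_n`. Since the derivatives
commute, both Casimir operators are the same normal-ordered operator plus `k Σ_a e_{aa}`,
respectively `n Σ_i e_{ii}`. -/

open MvPolynomial

/-- The `gl_k`-action on `P_{kn} = ℂ[x_{ai}]`: `e_{ab} ↦ Σ_i x_{ai} ∂_{bi}`. -/
noncomputable def glkOp (k n : ℕ) (a b : Fin k) :
    Module.End ℂ (MvPolynomial (Fin k × Fin n) ℂ) :=
  ∑ i : Fin n,
    (LinearMap.mulLeft ℂ (X (a, i) : MvPolynomial (Fin k × Fin n) ℂ)) ∘ₗ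
      (pderiv (b, i) : Derivation ℂ (MvPolynomial (Fin k × Fin n) ℂ)
        (MvPolynomial (Fin k × Fin n) ℂ)).toLinearMap

/-- The `gl_n`-action on `P_{kn} = ℂ[x_{ai}]`: `e_{ij} ↦ Σ_a x_{ai} ∂_{aj}`. -/
noncomputable def glnOp (k n : ℕ) (i j : Fin n) :
    Module.End ℂ (MvPolynomial (Fin k × Fin n) ℂ) :=
  ∑ a : Fin k,
    (LinearMap.mulLeft ℂ (X (a, i) : MvPolynomial (Fin k × Fin n) ℂ)) ∘ₗ
      (pderiv (a, j) : Derivation ℂ (MvPolynomial (Fin k × Fin n) ℂ)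
        (MvPolynomial (Fin k × Fin n) ℂ)).toLinearMap

theorem Fintype.sum_mul_sum_of_mul_eq_mul_add_ite {A ι : Type*} [Semiring A] [Fintype ι]
    [DecidableEq ι] (f g u v : ι → A)
    (h : ∀ i j, g i * u j = u j * g i + if i = j then 1 else 0) :
    (∑ i, f i * g i) * (∑ j, u j * v j) = ∑ i, ∑ j, f i * u j * g i * v j + ∑ i, f i * v i := by
  have term : ∀ i j, f i * g i * (u j * v j) =
      f i * u j * g i * v j + if i = j then f i * v j else 0 := by
    intro i j
    calc f i * g i * (u j * v j) = f i * (g i * u j) * v j := by simp only [mul_assoc]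
      _ = _ := by rw [h]; split_ifs <;> simp [mul_add, add_mul, mul_assoc]
  simp only [Fintype.sum_mul_sum, term, Finset.sum_add_distrib, Finset.sum_ite_eq,
    Finset.mem_univ, if_true]

namespace MvPolynomial

variable {R σ : Type*} [CommRing R] [DecidableEq σ]

theorem pderiv_pderiv_comm (u v : σ) (p : MvPolynomial σ R) :
    pderiv u (pderiv v p) = pderiv v (pderiv u p) := by
  have h : ⁅(pderiv u : Derivation R (MvPolynomial σ R) (MvPolynomial σ R)), pderiv v⁆ = 0 :=
    derivation_ext fun i => by
      rw [Derivation.commutator_apply]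
      simp [pderiv_X, Pi.single_apply, apply_ite]
  exact sub_eq_zero.1 (by rw [← Derivation.commutator_apply, h]; rfl)

theorem commute_pderiv_pderiv (u v : σ) :
    Commute (pderiv u : Derivation R (MvPolynomial σ R) (MvPolynomial σ R)).toLinearMap
      (pderiv v).toLinearMap :=
  LinearMap.ext (pderiv_pderiv_comm u v)

theorem pderiv_mul_mulLeft_X (u v : σ) :
    (pderiv u : Derivation R (MvPolynomial σ R) (MvPolynomial σ R)).toLinearMap *
        LinearMap.mulLeft R (X v) =
      LinearMap.mulLeft R (X v) * (pderiv u).toLinearMap + if u = v then 1 else 0 := by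
  ext p
  by_cases h : u = v <;> simp [pderiv_X, h, add_comm]

end MvPolynomial

section

variable (k n : ℕ)

noncomputable def normalOrderedCasimir : Module.End ℂ (MvPolynomial (Fin k × Fin n) ℂ) :=
  ∑ a : Fin k, ∑ b : Fin k, ∑ i : Fin n, ∑ j : Fin n,
    LinearMap.mulLeft ℂ (X (a, i)) * LinearMap.mulLeft ℂ (X (b, j)) *
      (pderiv (b, i)).toLinearMap * (pderiv (a, j)).toLinearMap

theorem normalOrderedCasimir_eq_sum_sum :
    normalOrderedCasimir k n =
      ∑ i : Fin n, ∑ j : Fin n, ∑ a : Fin k, ∑ b : Fin k,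
        LinearMap.mulLeft ℂ (X (a, i)) * LinearMap.mulLeft ℂ (X (b, j)) *
          (pderiv (a, j)).toLinearMap * (pderiv (b, i)).toLinearMap := by
  simp only [normalOrderedCasimir, ← Fintype.sum_prod_type']
  refine Fintype.sum_equiv
    ((Equiv.prodAssoc _ _ _).symm.trans ((Equiv.prodComm _ _).trans (Equiv.prodAssoc _ _ _)))
    _ _ fun _ => ?_
  rw [mul_assoc, (commute_pderiv_pderiv _ _).eq, ← mul_assoc]
  rfl

theorem glkOp_comp_glkOp (a b : Fin k) :
    glkOp k n a b ∘ₗ glkOp k n b a =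
      (∑ i : Fin n, ∑ j : Fin n, LinearMap.mulLeft ℂ (X (a, i)) * LinearMap.mulLeft ℂ (X (b, j)) *
        (pderiv (b, i)).toLinearMap * (pderiv (a, j)).toLinearMap) + glkOp k n a a :=
  Fintype.sum_mul_sum_of_mul_eq_mul_add_ite _ _ _ _ fun i j => by
    simp [pderiv_mul_mulLeft_X]

theorem glnOp_comp_glnOp (i j : Fin n) :
    glnOp k n i j ∘ₗ glnOp k n j i =
      (∑ a : Fin k, ∑ b : Fin k, LinearMap.mulLeft ℂ (X (a, i)) * LinearMap.mulLeft ℂ (X (b, j)) *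
        (pderiv (a, j)).toLinearMap * (pderiv (b, i)).toLinearMap) + glnOp k n i i :=
  Fintype.sum_mul_sum_of_mul_eq_mul_add_ite _ _ _ _ fun a b => by
    simp [pderiv_mul_mulLeft_X]

theorem sum_glkOp_comp_glkOp :
    ∑ a : Fin k, ∑ b : Fin k, glkOp k n a b ∘ₗ glkOp k n b a =
      normalOrderedCasimir k n + (k : ℂ) • ∑ a : Fin k, glkOp k n a a := by
  simp only [glkOp_comp_glkOp, Finset.sum_add_distrib, Finset.sum_const, Finset.card_univ,
    Fintype.card_fin, Nat.cast_smul_eq_nsmul, Finset.smul_sum]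
  rfl

theorem sum_glnOp_comp_glnOp :
    ∑ i : Fin n, ∑ j : Fin n, glnOp k n i j ∘ₗ glnOp k n j i =
      normalOrderedCasimir k n + (n : ℂ) • ∑ i : Fin n, glnOp k n i i := by
  simp only [glnOp_comp_glnOp, Finset.sum_add_distrib, Finset.sum_const, Finset.card_univ,
    Fintype.card_fin, Nat.cast_smul_eq_nsmul, Finset.smul_sum]
  rw [normalOrderedCasimir_eq_sum_sum]

end

/-- On `P_{kn}`, the operators `I^{(k)} − k Σ_a e_{aa}^{(k)}` and
`I^{(n)} − n Σ_i e_{ii}^{(n)}` coincide, where `I^{(k)} = Σ_{a,b} e_{ab} e_{ba}`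
and `I^{(n)} = Σ_{i,j} e_{ij} e_{ji}` are the Casimir elements realized as
differential operators. -/
theorem casimir_duality (k n : ℕ) :
    (∑ a : Fin k, ∑ b : Fin k, glkOp k n a b ∘ₗ glkOp k n b a)
        - (k : ℂ) • (∑ a : Fin k, glkOp k n a a) =
      (∑ i : Fin n, ∑ j : Fin n, glnOp k n i j ∘ₗ glnOp k n j i)
        - (n : ℂ) • (∑ i : Fin n, glnOp k n i i) := by
  rw [sum_glkOp_comp_glkOp, sum_glnOp_comp_glnOp, add_sub_cancel_right, add_sub_cancel_right]
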